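/- Let H be a tree with a root of height at most η and spread at most ζ ≥ 2, let t ≥ 1, and set c = (η + 3)! · |V(H)|. Then every H-free graph G that does not contain K_{t,t} as a subgraph has degeneracy at most (|V(H)| · ζ · t)^c, and hence χ(G) ≤ (|V(H)| · ζ · t)^c + 1. -/

import Mathlib

/-- `H` is contained in `G` as a (not necessarily induced) subgraph. -/
def ContainsSub {W V : Type*} (H : SimpleGraph W) (G : SimpleGraph V) : Prop :=
  ∃ f : W → V, Function.Injective f ∧ ∀ a b, H.Adj a b → G.Adj (f a) (f b)

/-- `K_d(t)`: the complete `d`-partite graph with all parts of size `t`. -/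
def Kpart (d t : ℕ) : SimpleGraph ((_ : Fin d) × Fin t) :=
  SimpleGraph.completeMultipartiteGraph (fun _ : Fin d => Fin t)

/-- `τ_d(G)`: the largest `t` such that `G` contains `K_d(t)` as a subgraph. -/
noncomputable def tauPart {V : Type*} (d : ℕ) (G : SimpleGraph V) : ℕ :=
  sSup {t : ℕ | ContainsSub (Kpart d t) G}

/-!
It suffices to show that a `K_{t,t}`-free graph of large minimum degree contains `H` as an
induced subgraph; the colouring bound then follows by greedy colouring.

Call `y` *viable* for height `h` and threshold `s` with respect to a set `F` of vertices if `y`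
has at least `s` neighbours outside the closed neighbourhood of `F`, each viable for height
`h - 1` with respect to `F ∪ {y}`. Adding a vertex `x` to `F` costs `y` at most a factor `4t` in
the threshold unless `x` is one of few *killers* of `y`: fewer than `t` vertices adjacent to almost
all candidates of `y` (there are few of them because `G` has no `K_{t,t}`), and the vertices
killing more than a `1/(4t)` fraction of the candidates, which a double count bounds by
`4t` times the number of killers one level down. Altogether `y` has at most `(8t)^h` killers.

Counting degrees level by level shows that large minimum degree forces a vertex viable for
height `η`. Starting from it, `H` is embedded in breadth-first order: each new vertex goes to a
candidate of its parent's image that is none of the killers of the images chosen so far, which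
keeps the embedding induced and all images viable.
-/

open Finset

namespace Finset

theorem card_filter_lt_mul_card_filter_mem_le {α β : Type*} [Fintype β] [DecidableEq β]
    (P : Finset α)
    (K : α → Finset β) {c k : ℕ} (hK : ∀ w ∈ P, #(K w) ≤ k) :
    #{x | #P < c * #{w ∈ P | x ∈ K w}} ≤ c * k := by
  set T : Finset β := {x | #P < c * #{w ∈ P | x ∈ K w}}
  rcases P.eq_empty_or_nonempty with rfl | hP
  · simp [T]
  refine Nat.le_of_mul_le_mul_right ?_ hP.card_pos
  calc #T * #P = ∑ _x ∈ T, #P := by rw [sum_const, smul_eq_mul]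
    _ ≤ ∑ x ∈ T, c * #{w ∈ P | x ∈ K w} := sum_le_sum fun x hx => (mem_filter.1 hx).2.le
    _ = c * ∑ w ∈ P, #{x ∈ T | x ∈ K w} := by
      rw [← mul_sum]
      exact congrArg _ (sum_card_bipartiteAbove_eq_sum_card_bipartiteBelow (fun x w => x ∈ K w))
    _ ≤ c * ∑ _w ∈ P, k := by
      gcongr with w hw
      exact (card_le_card fun x hx => (mem_filter.1 hx).2).trans (hK w hw)
    _ = c * k * #P := by rw [sum_const, smul_eq_mul]; ring

theorem sum_card_filter_and_mem_eq {α β : Type*} [Fintype α] [Fintype β] [DecidableEq α]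
    (P : β → Prop) [DecidablePred P] (K : β → Finset α) :
    ∑ x, #{w | P w ∧ x ∈ K w} = ∑ w with P w, #(K w) := by
  have := sum_card_bipartiteAbove_eq_sum_card_bipartiteBelow (s := univ) (t := {w | P w})
    (r := fun x w => x ∈ K w)
  simpa only [bipartiteAbove, bipartiteBelow, filter_filter, filter_mem_eq_inter, univ_inter]
    using this

end Finset

/-- A minimum degree above `inducedTreeDegree n t η` forces, in a `K_{t,t}`-free graph, an induced
copy of every tree on `n` vertices of height at most `η`: the embedding needs final threshold
`n (8t)^η + 1` (more than the killers of all images), times `(4t)^n` for the `n` steps, and a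
vertex viable for height `η` with threshold `s` costs degree `η (s (4t)^η + (8t)^η)`. -/
def inducedTreeDegree (n t η : ℕ) : ℕ :=
  η * ((n * (8 * t) ^ η + 1) * (4 * t) ^ n * (4 * t) ^ η + (8 * t) ^ η)

theorem seven_mul_add_six_le_factorial (η : ℕ) : 7 * η + 6 ≤ (η + 3).factorial := by
  have h : (η + 3).factorial = (η + 3) * ((η + 2) * ((η + 1) * η.factorial)) := by
    simp [Nat.factorial_succ]
  rw [h]
  calc 7 * η + 6 ≤ (η + 3) * ((η + 2) * (η + 1)) := by
        nlinarith [Nat.zero_le (η * η), Nat.zero_le (η * η * η)]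
    _ ≤ (η + 3) * ((η + 2) * ((η + 1) * η.factorial)) := by
      gcongr
      exact Nat.le_mul_of_pos_right _ η.factorial_pos

theorem inducedTreeDegree_le {n ζ t η : ℕ} (hn : 0 < n) (hζ : 2 ≤ ζ) (ht : 0 < t) :
    inducedTreeDegree n t η ≤ (n * ζ * t) ^ ((η + 3).factorial * n) := by
  set M := n * ζ * t
  have hnM : n ≤ M := Nat.le_mul_of_pos_right _ ht |>.trans' (Nat.le_mul_of_pos_right _ (by omega))
  have h2t : 2 * t ≤ M := calc
    2 * t ≤ ζ * t := Nat.mul_le_mul_right _ hζ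
    _ ≤ n * (ζ * t) := Nat.le_mul_of_pos_left _ hn
    _ = M := by ring
  have h8t : 8 * t ≤ M ^ 3 := calc
    8 * t ≤ (2 * t) ^ 3 := by nlinarith [Nat.le_self_pow (n := 3) (by norm_num) t]
    _ ≤ M ^ 3 := pow_le_pow_left₀ (by omega) h2t 3
  have hη : 3 * η ≤ M ^ (η + 2) := calc
    3 * η ≤ 2 ^ (η + 2) := by rw [pow_add]; linarith [η.lt_two_pow_self]
    _ ≤ M ^ (η + 2) := pow_le_pow_left₀ (by omega) (by nlinarith) _
  have hA : n * (8 * t) ^ η + 1 ≤ 2 * n * (8 * t) ^ η := by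
    nlinarith [Nat.one_le_pow η (8 * t) (by omega)]
  have hB : (4 * t) ^ n * (4 * t) ^ η ≤ (8 * t) ^ (n + η) := by
    rw [← pow_add]; exact pow_le_pow_left₀ (Nat.zero_le _) (by omega) _
  have hC : (8 * t) ^ η ≤ n * (8 * t) ^ (n + 2 * η) :=
    (Nat.pow_le_pow_right (by omega) (by omega)).trans (Nat.le_mul_of_pos_left _ hn)
  calc η * ((n * (8 * t) ^ η + 1) * (4 * t) ^ n * (4 * t) ^ η + (8 * t) ^ η)
      ≤ η * (2 * n * (8 * t) ^ η * (8 * t) ^ (n + η) + n * (8 * t) ^ (n + 2 * η)) := by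
        rw [mul_assoc _ ((4 * t) ^ n)]; gcongr
    _ = 3 * η * n * (8 * t) ^ (n + 2 * η) := by ring
    _ ≤ M ^ (η + 2) * M * (M ^ 3) ^ (n + 2 * η) := by gcongr
    _ = M ^ (7 * η + 3 * n + 3) := by ring
    _ ≤ M ^ ((η + 3).factorial * n) := by
        refine Nat.pow_le_pow_right (by omega) ?_
        nlinarith [seven_mul_add_six_le_factorial η]

theorem ContainsSub.trans_embedding {U V W : Type*} {K : SimpleGraph U} {G' : SimpleGraph W}
    {G : SimpleGraph V} (h : ContainsSub K G') (e : G' ↪g G) : ContainsSub K G :=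
  let ⟨f, hf, hadj⟩ := h
  ⟨e ∘ f, e.injective.comp hf, fun a b hab => e.map_adj_iff.2 (hadj a b hab)⟩

namespace SimpleGraph

section General

variable {V : Type*} {G : SimpleGraph V}

theorem containsSub_kpart_two_of_isCompleteBetween {t : ℕ} (ht : 0 < t) {A B : Finset V}
    (hA : #A = t) (hB : #B = t) (hAB : G.IsCompleteBetween A B) : ContainsSub (Kpart 2 t) G := by
  classical
  have hne : A ≠ B := by
    rintro rfl
    obtain ⟨a, ha⟩ := card_pos.1 (hA ▸ ht)
    exact G.irrefl (hAB ha ha)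
  let K : G.CompleteEquipartiteSubgraph 2 t :=
    { parts := {A, B}
      card_parts := .inl (card_pair hne)
      card_mem_parts := by simp only [mem_insert, mem_singleton]; rintro _ (rfl | rfl) <;> assumption
      isCompleteBetween := by
        rw [coe_pair, Set.pairwise_pair]
        exact fun _ => ⟨hAB, hAB.symm⟩ }
  let f := K.toCopy.comp completeEquipartiteGraph.completeMultipartiteGraph.symm.toCopy
  exact ⟨f, f.injective, fun _ _ h => f.toHom.map_adj h⟩

theorem degree_induce_eq_ncard (s : Finset V) (v : (s : Set V))
    [Fintype ((G.induce (s : Set V)).neighborSet v)] :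
    (G.induce (s : Set V)).degree v = {w | w ∈ s ∧ G.Adj v w}.ncard := by
  have : {w | w ∈ s ∧ G.Adj v w} = Subtype.val '' (G.induce (s : Set V)).neighborSet v := by
    ext w
    simp [and_comm]
  rw [this, Set.ncard_image_of_injective _ Subtype.val_injective, ← card_neighborSet_eq_degree,
    ← Nat.card_eq_fintype_card, Nat.card_coe_set_eq]

variable [Fintype V]

theorem sum_card_filter_and_adj_eq [DecidableRel G.Adj] (P : V → Prop) [DecidablePred P] :
    ∑ y, #{w | P w ∧ G.Adj w y} = ∑ w with P w, G.degree w := by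
  have := sum_card_bipartiteAbove_eq_sum_card_bipartiteBelow (s := univ) (t := {w | P w})
    (r := fun y w => G.Adj w y)
  simpa only [bipartiteAbove, bipartiteBelow, filter_filter, ← neighborFinset_eq_filter,
    card_neighborFinset_eq_degree] using this

end General

section Viability

open scoped Classical

variable {V : Type*} [Fintype V] (G : SimpleGraph V)

noncomputable def nearDominators (t : ℕ) (B : Finset V) : Finset V :=
  {x | 2 * t * #{b ∈ B | b ≠ x ∧ ¬G.Adj x b} < #B}

/-- `G.Viable h s F y`: `y` can still host a vertex whose subtree has height `h` in an induced
embedding whose other images form `F`, with at least `s` candidates at every level. -/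
def Viable : ℕ → ℕ → Finset V → V → Prop
  | 0, _, _, _ => True
  | h + 1, s, F, y =>
    s ≤ #{w | G.Adj y w ∧ w ∉ F ∧ (∀ f ∈ F, ¬G.Adj f w) ∧ Viable h s (insert y F) w}

noncomputable def pool (h s : ℕ) (F : Finset V) (y : V) : Finset V :=
  {w | G.Adj y w ∧ w ∉ F ∧ (∀ f ∈ F, ¬G.Adj f w) ∧ G.Viable h s (insert y F) w}

/-- The vertices whose addition to `F` may cost `y` more than a factor `4t` of its threshold. -/
noncomputable def killers (t : ℕ) : ℕ → ℕ → Finset V → V → Finset V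
  | 0, _, _, _ => ∅
  | h + 1, s, F, y => G.nearDominators t (G.pool h s F y) ∪
      ({x | #(G.pool h s F y) < 4 * t * #{w ∈ G.pool h s F y | x ∈ killers t h s (insert y F) w}} :
        Finset V)

variable {G} {t h s : ℕ} {F : Finset V} {x y w : V}

theorem card_nearDominators_lt (hK : ¬ContainsSub (Kpart 2 t) G) (ht : 0 < t)
    {B : Finset V} (hB : 4 * t ≤ #B) : #(G.nearDominators t B) < t := by
  by_contra! htD
  obtain ⟨T, hTD, hT⟩ := exists_subset_card_eq htD
  set miss : V → Finset V := fun x => {b ∈ B | b ≠ x ∧ ¬G.Adj x b}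
  have hmiss : 2 * ∑ x ∈ T, #(miss x) + 1 ≤ #B := by
    have : ∑ x ∈ T, (2 * t * #(miss x) + 1) ≤ ∑ _x ∈ T, #B :=
      sum_le_sum fun x hx => (mem_filter.1 (hTD hx)).2
    simp only [sum_add_distrib, ← mul_sum, sum_const, hT, smul_eq_mul, mul_one] at this
    exact Nat.le_of_mul_le_mul_left (by linarith) ht
  set U : Finset V := {b ∈ B | ∀ x ∈ T, b ≠ x ∧ G.Adj x b}
  have hBU : B \ U ⊆ T ∪ T.biUnion miss := by
    intro b hb
    simp only [U, mem_sdiff, mem_filter, not_and, not_forall] at hb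
    obtain ⟨x, hx, hbx⟩ := hb.2 hb.1
    by_cases hbx' : b = x
    · exact mem_union_left _ (hbx' ▸ hx)
    · exact mem_union_right _ (mem_biUnion.2 ⟨x, hx, mem_filter.2 ⟨hb.1, hbx', hbx hbx'⟩⟩)
  have hU : t ≤ #U := by
    have h1 := (le_card_sdiff U B).trans (card_le_card hBU)
    have h2 := (card_union_le T (T.biUnion miss)).trans
      (Nat.add_le_add_left (card_biUnion_le (s := T) (t := miss)) _)
    omega
  obtain ⟨C, hCU, hC⟩ := exists_subset_card_eq hU
  exact hK <| containsSub_kpart_two_of_isCompleteBetween ht hT hC fun x hx c hc =>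
    ((mem_filter.1 (hCU hc)).2 x hx).2

theorem viable_succ : G.Viable (h + 1) s F y ↔ s ≤ #(G.pool h s F y) := Iff.rfl

theorem mem_pool : w ∈ G.pool h s F y ↔
    G.Adj y w ∧ w ∉ F ∧ (∀ f ∈ F, ¬G.Adj f w) ∧ G.Viable h s (insert y F) w := by
  simp [pool]

theorem Viable.of_le {s' : ℕ} (hs : s ≤ s') : ∀ {h F y}, G.Viable h s' F y → G.Viable h s F y
  | 0, _, _, _ => trivial
  | h + 1, F, y, hv => by
    rw [viable_succ] at hv ⊢
    refine hs.trans (hv.trans (card_le_card fun w hw => ?_))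
    rw [mem_pool] at hw ⊢
    exact ⟨hw.1, hw.2.1, hw.2.2.1, hw.2.2.2.of_le hs⟩

theorem Viable.insert_of_notMem_killers (ht : 0 < t) :
    ∀ {h F y}, G.Viable h (4 * t * s) F y → x ∉ G.killers t h (4 * t * s) F y →
      G.Viable h s (insert x F) y
  | 0, _, _, _, _ => trivial
  | h + 1, F, y, hv, hx => by
    rw [viable_succ] at hv ⊢
    set P := G.pool h (4 * t * s) F y
    set A : Finset V := {b ∈ P | b ≠ x ∧ ¬G.Adj x b}
    set L : Finset V := {w ∈ P | x ∈ G.killers t h (4 * t * s) (insert y F) w}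
    obtain ⟨hxA, hxL⟩ : #P ≤ 2 * t * #A ∧ 4 * t * #L ≤ #P := by
      simpa [killers, nearDominators] using hx
    have hAL : A \ L ⊆ G.pool h s (insert x F) y := by
      intro w hw
      simp only [A, L, mem_sdiff, mem_filter, not_and] at hw
      obtain ⟨⟨hwP, hwx, hxw⟩, hwL⟩ := hw
      obtain ⟨hyw, hwF, hFw, hvw⟩ := mem_pool.1 hwP
      refine mem_pool.2 ⟨hyw, by simp [hwx, hwF], by simpa [hxw] using hFw, ?_⟩
      rw [insert_comm]
      exact hvw.insert_of_notMem_killers ht (hwL hwP)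
    refine le_trans ?_ ((le_card_sdiff L A).trans (card_le_card hAL))
    refine Nat.le_of_mul_le_mul_left ?_ (by positivity : 0 < 4 * t)
    -- `4t · #(A \ L) ≥ 2 #P - #P ≥ 4t · s`
    rw [Nat.mul_sub]
    have : 2 * #P ≤ 4 * t * #A := by nlinarith
    omega

theorem card_killers_le (hK : ¬ContainsSub (Kpart 2 t) G) (ht : 0 < t) :
    ∀ {h s F y}, 4 * t ≤ s → G.Viable h s F y → #(G.killers t h s F y) ≤ (8 * t) ^ h
  | 0, _, _, _, _, _ => by simp [killers]
  | h + 1, s, F, y, hs, hv => by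
    rw [killers]
    have hnd := card_nearDominators_lt hK ht (hs.trans (viable_succ.1 hv))
    have hld := card_filter_lt_mul_card_filter_mem_le (G.pool h s F y)
      (G.killers t h s (insert y F)) (c := 4 * t)
      fun w hw => card_killers_le hK ht hs (mem_pool.1 hw).2.2.2
    have : t ≤ 4 * t * (8 * t) ^ h :=
      le_mul_of_le_of_one_le (by omega) (Nat.one_le_pow _ _ (by omega))
    calc _ ≤ _ := card_union_le _ _
      _ ≤ 4 * t * (8 * t) ^ h + 4 * t * (8 * t) ^ h := by omega
      _ = (8 * t) ^ (h + 1) := by ring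

end Viability

section MinDegree

open scoped Classical

variable {V : Type*} [Fintype V] {G : SimpleGraph V} {t : ℕ}

theorem degree_le_of_not_viable_succ (ht : 0 < t) {h s : ℕ} {y : V}
    (hy : ¬G.Viable (h + 1) s ∅ y) :
    G.degree y ≤ s + #{w | ¬G.Viable h (4 * t * s) ∅ w ∧ G.Adj w y} +
      #{w | G.Viable h (4 * t * s) ∅ w ∧ y ∈ G.killers t h (4 * t * s) ∅ w} := by
  rw [viable_succ, not_le] at hy
  set A : Finset V := {w | ¬G.Viable h (4 * t * s) ∅ w ∧ G.Adj w y}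
  set B : Finset V := {w | G.Viable h (4 * t * s) ∅ w ∧ y ∈ G.killers t h (4 * t * s) ∅ w}
  have hsub : G.neighborFinset y ⊆ G.pool h s ∅ y ∪ A ∪ B := by
    intro w hw
    rw [mem_neighborFinset] at hw
    by_cases hv : G.Viable h (4 * t * s) ∅ w
    · by_cases hk : y ∈ G.killers t h (4 * t * s) ∅ w
      · simp [B, hv, hk]
      · refine mem_union_left _ (mem_union_left _ (mem_pool.2 ⟨hw, by simp, by simp, ?_⟩))
        exact hv.insert_of_notMem_killers ht hk
    · simp [A, hv, hw.symm]
  calc G.degree y = #(G.neighborFinset y) := (card_neighborFinset_eq_degree _ _).symm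
    _ ≤ #(G.pool h s ∅ y) + #A + #B := (card_le_card hsub).trans
      ((card_union_le _ _).trans (Nat.add_le_add_right (card_union_le _ _) _))
    _ ≤ s + #A + #B := by omega

theorem sum_degree_not_viable_le (hK : ¬ContainsSub (Kpart 2 t) G) (ht : 0 < t) :
    ∀ h {s}, 0 < s → ∑ y with ¬G.Viable h s ∅ y, G.degree y ≤
      h * (s * (4 * t) ^ h + (8 * t) ^ h) * Fintype.card V
  | 0, s, _ => by simp [Viable]
  | h + 1, s, hs => by
    have IH := sum_degree_not_viable_le hK ht h (s := 4 * t * s) (by positivity)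
    have hkill : ∑ w with G.Viable h (4 * t * s) ∅ w, #(G.killers t h (4 * t * s) ∅ w) ≤
        Fintype.card V * (8 * t) ^ h := calc
      _ ≤ ∑ _w : V, (8 * t) ^ h := (sum_le_sum fun w hw =>
          card_killers_le hK ht (Nat.le_mul_of_pos_right _ hs) (mem_filter.1 hw).2).trans
        (sum_le_sum_of_subset (filter_subset _ _))
      _ = Fintype.card V * (8 * t) ^ h := by rw [sum_const, card_univ, smul_eq_mul]
    calc ∑ y with ¬G.Viable (h + 1) s ∅ y, G.degree y
        ≤ ∑ y, (s + #{w | ¬G.Viable h (4 * t * s) ∅ w ∧ G.Adj w y} +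
            #{w | G.Viable h (4 * t * s) ∅ w ∧ y ∈ G.killers t h (4 * t * s) ∅ w}) :=
          (sum_le_sum fun y hy => degree_le_of_not_viable_succ ht (mem_filter.1 hy).2).trans
            (sum_le_sum_of_subset (filter_subset _ _))
      _ ≤ Fintype.card V * s + h * (4 * t * s * (4 * t) ^ h + (8 * t) ^ h) * Fintype.card V +
            Fintype.card V * (8 * t) ^ h := by
          rw [sum_add_distrib, sum_add_distrib, sum_const, card_univ, smul_eq_mul,
            sum_card_filter_and_adj_eq, sum_card_filter_and_mem_eq]
          gcongr
      _ ≤ (h + 1) * (s * (4 * t) ^ (h + 1) + (8 * t) ^ (h + 1)) * Fintype.card V := by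
          have h1 : s ≤ s * (4 * t) ^ (h + 1) := Nat.le_mul_of_pos_right _ (by positivity)
          have h2 : (8 * t) ^ h ≤ (8 * t) ^ (h + 1) := Nat.pow_le_pow_right (by omega) h.le_succ
          have h3 : h * (s * (4 * t) ^ (h + 1) + (8 * t) ^ h) ≤
              h * (s * (4 * t) ^ (h + 1) + (8 * t) ^ (h + 1)) := by gcongr
          rw [show 4 * t * s * (4 * t) ^ h = s * (4 * t) ^ (h + 1) by ring]
          nlinarith [Nat.mul_le_mul_left (Fintype.card V) h1,
            Nat.mul_le_mul_left (Fintype.card V) h2, Nat.mul_le_mul_right (Fintype.card V) h3]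

theorem exists_viable [Nonempty V] (hK : ¬ContainsSub (Kpart 2 t) G) (ht : 0 < t) {h s : ℕ}
    (hs : 0 < s) (hdeg : ∀ v, h * (s * (4 * t) ^ h + (8 * t) ^ h) < G.degree v) :
    ∃ y, G.Viable h s ∅ y := by
  by_contra! hnone
  have hsum := sum_degree_not_viable_le hK ht h hs
  rw [filter_true_of_mem fun y _ => hnone y] at hsum
  have := sum_lt_sum_of_nonempty univ_nonempty fun v (_ : v ∈ univ) => hdeg v
  rw [sum_const, card_univ, smul_eq_mul] at this
  linarith

end MinDegree

section Tree

variable {W : Type*} {H : SimpleGraph W}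

theorem IsTree.existsUnique_adj_dist_lt (hH : H.IsTree) {r w : W} (hw : w ≠ r) :
    ∃! p, H.Adj p w ∧ H.dist r p < H.dist r w := by
  classical
  obtain ⟨P, hP, hPlen⟩ := hH.connected.exists_path_of_dist r w
  have hPnil : ¬P.Nil := fun h => hw h.eq.symm
  refine ⟨P.penultimate, ⟨P.adj_penultimate hPnil, ?_⟩, fun a ⟨haw, hdist⟩ => ?_⟩
  · have := (P.length_dropLast_add_one hPnil)
    have := dist_le P.dropLast
    omega
  obtain ⟨Q, hQ, hQlen⟩ := hH.connected.exists_path_of_dist r a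
  have hwQ : w ∉ Q.support := fun hwQ => by
    have := (dist_le (Q.takeUntil w hwQ)).trans (Q.length_takeUntil_le_length hwQ)
    omega
  exact hH.isAcyclic.eq_penultimate_of_adj_end hP haw.symm
    (hH.isAcyclic.mem_support_of_ne_mem_support_of_adj_of_isPath hP hQ haw.symm hwQ)

theorem IsTree.exists_parent_mem (hH : H.IsTree) {r w : W} {S : Finset W} (hSne : S.Nonempty)
    (hS : ∀ a ∈ S, ∀ b ∉ S, H.dist r a ≤ H.dist r b) (hwS : w ∉ S)
    (hw : ∀ b ∉ S, H.dist r w ≤ H.dist r b) :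
    ∃ p ∈ S, H.Adj p w ∧ H.dist r p + 1 = H.dist r w ∧ ∀ a ∈ S, H.Adj a w → a = p := by
  have hwr : w ≠ r := by
    rintro rfl
    obtain ⟨a, ha⟩ := hSne
    have : H.dist w a = 0 := by simpa using hS a ha w hwS
    rw [hH.connected.dist_eq_zero_iff] at this
    exact hwS (this ▸ ha)
  obtain ⟨p, ⟨hpw, hpdist⟩, hp⟩ := hH.existsUnique_adj_dist_lt hwr
  have hpS : p ∈ S := by
    by_contra hpS
    exact (hw p hpS).not_gt hpdist
  refine ⟨p, hpS, hpw, ?_, fun a ha haw => hp a ⟨haw, ?_⟩⟩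
  · have := hH.dist_eq_dist_add_one_of_adj r hpw
    omega
  · exact (hS a ha w hwS).lt_of_ne (hH.dist_ne_of_adj r haw)

end Tree

section Embedding

open scoped Classical

variable {W V : Type*} [Fintype V] {H : SimpleGraph W} {G : SimpleGraph V}
  {ℓ : W → ℕ} {t s η : ℕ} {S : Finset W} {φ : W → V} {w p : W} {x y : V}

structure IsViableEmbeddingOn (H : SimpleGraph W) (G : SimpleGraph V) (ℓ : W → ℕ) (s : ℕ)
    (S : Finset W) (φ : W → V) : Prop where
  injOn : Set.InjOn φ S
  adj_iff : ∀ a ∈ S, ∀ b ∈ S, G.Adj (φ a) (φ b) ↔ H.Adj a b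
  viable : ∀ a ∈ S, G.Viable (ℓ a) s ((S.erase a).image φ) (φ a)

theorem isViableEmbeddingOn_singleton (hy : G.Viable (ℓ w) s ∅ y) :
    IsViableEmbeddingOn H G ℓ s {w} fun _ => y where
  injOn := by simp
  adj_iff := by simp
  viable := by simpa using hy

namespace IsViableEmbeddingOn

theorem exists_mem_pool_notMem_killers (hφ : IsViableEmbeddingOn H G ℓ (4 * t * s) S φ)
    (hK : ¬ContainsSub (Kpart 2 t) G) (ht : 0 < t) (hp : p ∈ S) {h : ℕ} (hph : ℓ p = h + 1)
    (hη : ∀ a ∈ S, ℓ a ≤ η) (hroom : #S * (8 * t) ^ η < s) :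
    ∃ x ∈ G.pool h (4 * t * s) ((S.erase p).image φ) (φ p),
      ∀ a ∈ S, x ∉ G.killers t (ℓ a) (4 * t * s) ((S.erase a).image φ) (φ a) := by
  set X := S.biUnion fun a => G.killers t (ℓ a) (4 * t * s) ((S.erase a).image φ) (φ a)
  have hs : 0 < s := Nat.zero_lt_of_lt hroom
  have hX : #X < #(G.pool h (4 * t * s) ((S.erase p).image φ) (φ p)) := by
    have hpool := hφ.viable p hp
    rw [hph, viable_succ] at hpool
    refine lt_of_lt_of_le ?_ hpool
    calc #X ≤ ∑ a ∈ S, (8 * t) ^ η := by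
          refine card_biUnion_le.trans (sum_le_sum fun a ha => ?_)
          exact (card_killers_le hK ht (Nat.le_mul_of_pos_right _ hs) (hφ.viable a ha)).trans
            (Nat.pow_le_pow_right (by omega) (hη a ha))
      _ < s := by rwa [sum_const, smul_eq_mul]
      _ ≤ 4 * t * s := Nat.le_mul_of_pos_left _ (by positivity)
  obtain ⟨x, hx, hxX⟩ := exists_mem_notMem_of_card_lt_card hX
  exact ⟨x, hx, fun a ha hxa => hxX (mem_biUnion.2 ⟨a, ha, hxa⟩)⟩

theorem extend (hφ : IsViableEmbeddingOn H G ℓ (4 * t * s) S φ) (ht : 0 < t) (hwS : w ∉ S)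
    (hp : p ∈ S) (hpw : H.Adj p w) (hpar : ∀ a ∈ S, H.Adj a w → a = p)
    (hx : x ∈ G.pool (ℓ w) (4 * t * s) ((S.erase p).image φ) (φ p))
    (hxK : ∀ a ∈ S, x ∉ G.killers t (ℓ a) (4 * t * s) ((S.erase a).image φ) (φ a)) :
    IsViableEmbeddingOn H G ℓ s (insert w S) (Function.update φ w x) := by
  obtain ⟨hpx, hxF, hFx, hxv⟩ := mem_pool.1 hx
  set φ' := Function.update φ w x
  have hφ'S : Set.EqOn φ φ' S := fun a ha =>
    (Function.update_of_ne (ne_of_mem_of_not_mem ha hwS) _ _).symm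
  have hφ'w : φ' w = x := Function.update_self _ _ _
  have hx_new : ∀ a ∈ S, φ a ≠ x ∧ (G.Adj (φ a) x ↔ H.Adj a w) := by
    intro a ha
    by_cases hap : a = p
    · subst hap
      exact ⟨hpx.ne, iff_of_true hpx hpw⟩
    · have hmem : φ a ∈ (S.erase p).image φ := mem_image_of_mem φ (mem_erase.2 ⟨hap, ha⟩)
      exact ⟨fun h => hxF (h ▸ hmem), iff_of_false (hFx _ hmem) fun h => hap (hpar a ha h)⟩
  have himage : ∀ a ∈ S, ((insert w S).erase a).image φ' = insert x ((S.erase a).image φ) := by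
    intro a ha
    rw [erase_insert_of_ne (ne_of_mem_of_not_mem ha hwS).symm, image_insert, hφ'w,
      image_congr fun b hb => (hφ'S (mem_of_mem_erase hb)).symm]
  have himage_w : ((insert w S).erase w).image φ' = insert (φ p) ((S.erase p).image φ) := by
    rw [erase_insert hwS, ← image_congr hφ'S, ← image_insert, insert_erase hp]
  refine ⟨?_, ?_, ?_⟩
  · rw [coe_insert, Set.injOn_insert hwS]
    refine ⟨hφ.injOn.congr hφ'S, ?_⟩
    rintro ⟨a, ha, h⟩
    exact (hx_new a ha).1 (hφ'S ha ▸ h.trans hφ'w)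
  · intro a ha b hb
    rcases mem_insert.1 ha with rfl | haS <;> rcases mem_insert.1 hb with rfl | hbS
    · simp
    · rw [hφ'w, ← hφ'S hbS, G.adj_comm, H.adj_comm]
      exact (hx_new b hbS).2
    · rw [hφ'w, ← hφ'S haS]
      exact (hx_new a haS).2
    · rw [← hφ'S haS, ← hφ'S hbS]
      exact hφ.adj_iff a haS b hbS
  · intro a ha
    rcases mem_insert.1 ha with rfl | haS
    · rw [hφ'w, himage_w]
      exact hxv.of_le (Nat.le_mul_of_pos_left _ (by positivity))
    · rw [← hφ'S haS, himage a haS]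
      exact (hφ.viable a haS).insert_of_notMem_killers ht (hxK a haS)

end IsViableEmbeddingOn

variable {r : W}

theorem IsViableEmbeddingOn.exists_extend_of_isTree
    (hφ : IsViableEmbeddingOn H G (fun a => η - H.dist r a) (4 * t * s) S φ) (hH : H.IsTree)
    (hheight : ∀ w, H.dist r w ≤ η) (hK : ¬ContainsSub (Kpart 2 t) G) (ht : 0 < t)
    (hSne : S.Nonempty) (hS : ∀ a ∈ S, ∀ b ∉ S, H.dist r a ≤ H.dist r b) (hwS : w ∉ S)
    (hw : ∀ b ∉ S, H.dist r w ≤ H.dist r b) (hroom : #S * (8 * t) ^ η < s) :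
    ∃ φ', IsViableEmbeddingOn H G (fun a => η - H.dist r a) s (insert w S) φ' := by
  obtain ⟨p, hpS, hpw, hpdist, hpar⟩ := hH.exists_parent_mem hSne hS hwS hw
  obtain ⟨x, hx, hxK⟩ := hφ.exists_mem_pool_notMem_killers hK ht hpS
    (h := η - H.dist r w) (by have := hheight w; omega) (fun _ _ => Nat.sub_le _ _) hroom
  exact ⟨_, hφ.extend ht hwS hpS hpw hpar hx hxK⟩

variable [Fintype W]

theorem exists_isViableEmbeddingOn_of_viable (hH : H.IsTree) (hheight : ∀ w, H.dist r w ≤ η)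
    (hK : ¬ContainsSub (Kpart 2 t) G) (ht : 0 < t) (hs : Fintype.card W * (8 * t) ^ η < s)
    (hy : G.Viable η (s * (4 * t) ^ Fintype.card W) ∅ y) :
    ∀ m ≤ Fintype.card W, ∃ S : Finset W, ∃ φ : W → V, #S = m ∧
      (∀ a ∈ S, ∀ b ∉ S, H.dist r a ≤ H.dist r b) ∧
      IsViableEmbeddingOn H G (fun a => η - H.dist r a) (s * (4 * t) ^ (Fintype.card W - m)) S φ
  | 0, _ => ⟨∅, fun _ => y, rfl, by simp, by simp, by simp, by simp⟩
  | m + 1, hm => by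
    obtain ⟨S, φ, hSm, hS, hφ⟩ := exists_isViableEmbeddingOn_of_viable hH hheight hK ht hs hy m
      (by omega)
    have hSc : Sᶜ.Nonempty := card_pos.1 (by rw [card_compl]; omega)
    obtain ⟨w, hwS, hw⟩ := Sᶜ.exists_min_image (H.dist r) hSc
    simp only [mem_compl] at hwS hw
    suffices ∃ φ' : W → V, IsViableEmbeddingOn H G (fun a => η - H.dist r a)
        (s * (4 * t) ^ (Fintype.card W - (m + 1))) (insert w S) φ' by
      refine ⟨insert w S, this.choose, by rw [card_insert_of_notMem hwS, hSm], ?_, this.choose_spec⟩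
      intro a ha b hb
      rw [mem_insert, not_or] at hb
      rcases mem_insert.1 ha with rfl | ha
      exacts [hw b hb.2, hS a ha b hb.2]
    have hthr : s * (4 * t) ^ (Fintype.card W - m) =
        4 * t * (s * (4 * t) ^ (Fintype.card W - (m + 1))) := by
      rw [show Fintype.card W - m = Fintype.card W - (m + 1) + 1 by omega, pow_succ]
      ring
    rcases S.eq_empty_or_nonempty with rfl | hSne
    · have hw0 : H.dist r w = 0 := Nat.le_zero.1 (by simpa using hw r (notMem_empty r))
      refine ⟨fun _ => y, isViableEmbeddingOn_singleton ?_⟩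
      simp only [hw0, Nat.sub_zero]
      exact hy.of_le (Nat.mul_le_mul_left _ (Nat.pow_le_pow_right (by omega) (by omega)))
    · rw [hthr] at hφ
      refine hφ.exists_extend_of_isTree hH hheight hK ht hSne hS hwS hw ?_
      calc #S * (8 * t) ^ η ≤ Fintype.card W * (8 * t) ^ η := Nat.mul_le_mul_right _ (by omega)
        _ < s := hs
        _ ≤ _ := Nat.le_mul_of_pos_right _ (by positivity)

theorem nonempty_embedding_of_viable (hH : H.IsTree) (hheight : ∀ w, H.dist r w ≤ η)
    (hK : ¬ContainsSub (Kpart 2 t) G) (ht : 0 < t) (hs : Fintype.card W * (8 * t) ^ η < s)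
    (hy : G.Viable η (s * (4 * t) ^ Fintype.card W) ∅ y) : Nonempty (H ↪g G) := by
  obtain ⟨S, φ, hS, -, hφ⟩ :=
    exists_isViableEmbeddingOn_of_viable hH hheight hK ht hs hy _ le_rfl
  obtain rfl := eq_univ_of_card S hS
  exact ⟨⟨⟨φ, fun a b h => hφ.injOn (mem_univ a) (mem_univ b) h⟩,
    hφ.adj_iff _ (mem_univ _) _ (mem_univ _)⟩⟩

end Embedding

open scoped Classical in
theorem nonempty_embedding_of_forall_inducedTreeDegree_lt {W V : Type*} [Fintype W] [Fintype V]
    [Nonempty V] {H : SimpleGraph W} {G : SimpleGraph V} {r : W} {t η : ℕ} (hH : H.IsTree)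
    (hheight : ∀ w, H.dist r w ≤ η) (hK : ¬ContainsSub (Kpart 2 t) G) (ht : 0 < t)
    (hdeg : ∀ v, inducedTreeDegree (Fintype.card W) t η < G.degree v) :
    Nonempty (H ↪g G) := by
  obtain ⟨y, hy⟩ := exists_viable hK ht (by positivity) hdeg
  exact nonempty_embedding_of_viable hH hheight hK ht (lt_add_one _) hy

theorem colorable_of_forall_exists_ncard_adj_le {V : Type*} [Fintype V] {G : SimpleGraph V}
    {m : ℕ} (hG : ∀ s : Finset V, s.Nonempty → ∃ v ∈ s, {w | w ∈ s ∧ G.Adj v w}.ncard ≤ m) :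
    G.Colorable (m + 1) := by
  classical
  suffices ∀ s : Finset V, ∃ c : V → Fin (m + 1), ∀ a ∈ s, ∀ b ∈ s, G.Adj a b → c a ≠ c b by
    obtain ⟨c, hc⟩ := this univ
    exact ⟨Coloring.mk c fun hab => hc _ (mem_univ _) _ (mem_univ _) hab⟩
  intro s
  induction s using Finset.strongInduction with
  | H s ih =>
    rcases s.eq_empty_or_nonempty with rfl | hs
    · exact ⟨0, by simp⟩
    obtain ⟨v, hv, hdeg⟩ := hG s hs
    obtain ⟨c, hc⟩ := ih _ (erase_ssubset hv)
    have hN : #(({w ∈ s | G.Adj v w} : Finset V).image c) < #(univ : Finset (Fin (m + 1))) := by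
      refine card_image_le.trans_lt ?_
      rw [card_univ, Fintype.card_fin, ← Set.ncard_coe_finset, coe_filter]
      omega
    obtain ⟨col, -, hcol⟩ := exists_mem_notMem_of_card_lt_card hN
    refine ⟨Function.update c v col, fun a ha b hb hab => ?_⟩
    rcases eq_or_ne a v with rfl | hav <;> rcases eq_or_ne b a with rfl | hba
    · exact absurd hab (G.irrefl)
    · rw [Function.update_self, Function.update_of_ne hba]
      exact fun h => hcol (mem_image.2 ⟨b, mem_filter.2 ⟨hb, hab⟩, h.symm⟩)
    · exact absurd hab (G.irrefl)
    · rcases eq_or_ne b v with rfl | hbv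
      · rw [Function.update_self, Function.update_of_ne hav]
        exact fun h => hcol (mem_image.2 ⟨a, mem_filter.2 ⟨ha, hab.symm⟩, h⟩)
      · rw [Function.update_of_ne hav, Function.update_of_ne hbv]
        exact hc a (mem_erase.2 ⟨hav, ha⟩) b (mem_erase.2 ⟨hbv, hb⟩) hab

end SimpleGraph

theorem stmt_12_general {W : Type*} [Fintype W] (H : SimpleGraph W) (hH : H.IsTree) (r : W)
    (η ζ t : ℕ) (hζ : 2 ≤ ζ) (ht : 1 ≤ t)
    (hheight : ∀ w : W, H.dist r w ≤ η)
    {V : Type*} [Fintype V] (G : SimpleGraph V)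
    (hHfree : ¬ Nonempty (H ↪g G))
    (hKtt : ¬ ContainsSub (Kpart 2 t) G) :
    (∀ s : Finset V, s.Nonempty → ∃ v ∈ s,
        {w : V | w ∈ s ∧ G.Adj v w}.ncard ≤ (Fintype.card W * ζ * t) ^ ((η + 3).factorial * Fintype.card W)) ∧
    G.chromaticNumber ≤
      ((Fintype.card W * ζ * t) ^ ((η + 3).factorial * Fintype.card W) + 1 : ℕ) := by
  have hdegen : ∀ s : Finset V, s.Nonempty → ∃ v ∈ s, {w : V | w ∈ s ∧ G.Adj v w}.ncard ≤
      (Fintype.card W * ζ * t) ^ ((η + 3).factorial * Fintype.card W) := by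
    intro s hs
    by_contra! hdeg
    have : Nonempty (s : Set V) := hs.coe_sort
    obtain ⟨e⟩ := SimpleGraph.nonempty_embedding_of_forall_inducedTreeDegree_lt hH hheight
      (fun h => hKtt (h.trans_embedding (SimpleGraph.Embedding.induce _))) ht fun v => by
        rw [G.degree_induce_eq_ncard]
        exact (inducedTreeDegree_le (Fintype.card_pos_iff.2 ⟨r⟩) hζ ht).trans_lt (hdeg v v.2)
    exact hHfree ⟨e.trans (SimpleGraph.Embedding.induce _)⟩
  exact ⟨hdegen, (SimpleGraph.colorable_of_forall_exists_ncard_adj_le hdegen).chromaticNumber_le⟩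

theorem stmt_12 {W : Type*} [Fintype W] (H : SimpleGraph W) (hH : H.IsTree) (r : W)
    (η ζ t : ℕ) (hζ : 2 ≤ ζ) (ht : 1 ≤ t)
    (hheight : ∀ w : W, H.dist r w ≤ η)
    (hspread : ∀ u : W, {w : W | H.Adj u w ∧ H.dist r w = H.dist r u + 1}.ncard ≤ ζ)
    {V : Type*} [Fintype V] (G : SimpleGraph V)
    (hHfree : ¬ Nonempty (H ↪g G))
    (hKtt : ¬ ContainsSub (Kpart 2 t) G) :
    (∀ s : Finset V, s.Nonempty → ∃ v ∈ s,
        {w : V | w ∈ s ∧ G.Adj v w}.ncard ≤ (Fintype.card W * ζ * t) ^ ((η + 3).factorial * Fintype.card W)) ∧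
    G.chromaticNumber ≤
      ((Fintype.card W * ζ * t) ^ ((η + 3).factorial * Fintype.card W) + 1 : ℕ) :=
  stmt_12_general H hH r η ζ t hζ ht hheight G hHfree hKtt
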